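/- Let h: ℝ → ℝ be bounded and twice continuously differentiable with bounded derivatives up to order 2. For v ∈ ℝ, ω ∈ (0, 1] and φ: ℝ → ℝ bounded and four times continuously differentiable with bounded derivatives up to order 4, define R²(φ; v, ω) = ω [ (1/2) h(v) φ''(v) − I_{v,ω}(hφ) ] + ω² h(v) I_{v,ω}^{(4)}(φ). Then there exists a constant C₂, depending only on ‖h‖_{2,∞}, such that |R²(φ; v, ω)| ≤ C₂ ω ‖φ‖_{4,∞} for all such v, ω, φ. -/
import Mathlib

open MeasureTheory ProbabilityTheory
open scoped NNReal


/-- The norm `‖ψ‖_{m,∞} = ∑_{k=0}^m sup_x |ψ^{(k)}(x)|`. -/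
noncomputable def normM (m : ℕ) (ψ : ℝ → ℝ) : ℝ :=
  ∑ k ∈ Finset.range (m + 1), ⨆ x : ℝ, |iteratedDeriv k ψ x|

/-- `I_{v,ω}(ψ) = ∫ y² (∫₀¹ ψ''(v + u y √ω)(1-u) du) γ(dy)`. -/
noncomputable def Iv (v ω : ℝ) (ψ : ℝ → ℝ) : ℝ :=
  ∫ y, y ^ 2 * (∫ u in (0:ℝ)..1, iteratedDeriv 2 ψ (v + u * y * Real.sqrt ω) * (1 - u))
    ∂(gaussianReal 0 1)

/-- `I_{v,ω}^{(k)}(φ) = ∫ y⁴ (∫₀¹ φ^{(k)}(v + u y √ω)(1-u)³/6 du) γ(dy)`. -/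
noncomputable def I4 (k : ℕ) (v ω : ℝ) (φ : ℝ → ℝ) : ℝ :=
  ∫ y, y ^ 4 * (∫ u in (0:ℝ)..1,
      iteratedDeriv k φ (v + u * y * Real.sqrt ω) * ((1 - u) ^ 3 / 6))
    ∂(gaussianReal 0 1)


lemma pow_mul_exp_bound (n : ℕ) (x : ℝ) :
    |x| ^ n * Real.exp (-(1/2) * x ^ 2) ≤
      (n.factorial : ℝ) * Real.exp 1 * Real.exp (-(1/4) * x ^ 2) := by
  have h1 : |x| ^ n ≤ (n.factorial : ℝ) * Real.exp |x| := by
    have h := Real.pow_div_factorial_le_exp |x| (abs_nonneg x) n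
    rw [div_le_iff₀ (by positivity : (0:ℝ) < (n.factorial : ℝ))] at h
    linarith
  have h2 : Real.exp |x| * Real.exp (-(1/2) * x ^ 2) ≤
      Real.exp 1 * Real.exp (-(1/4) * x ^ 2) := by
    rw [← Real.exp_add, ← Real.exp_add]
    apply Real.exp_le_exp.2
    nlinarith [sq_nonneg (|x| - 2), sq_abs x]
  calc |x| ^ n * Real.exp (-(1/2) * x ^ 2)
      ≤ ((n.factorial : ℝ) * Real.exp |x|) * Real.exp (-(1/2) * x ^ 2) :=
        mul_le_mul_of_nonneg_right h1 (Real.exp_pos _).le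
    _ = (n.factorial : ℝ) * (Real.exp |x| * Real.exp (-(1/2) * x ^ 2)) := by ring
    _ ≤ (n.factorial : ℝ) * (Real.exp 1 * Real.exp (-(1/4) * x ^ 2)) :=
        mul_le_mul_of_nonneg_left h2 (by positivity)
    _ = _ := by ring

lemma myGaussInt (n : ℕ) : Integrable (fun y : ℝ => y ^ n) (gaussianReal 0 1) := by
  rw [gaussianReal_of_var_ne_zero 0 one_ne_zero,
    integrable_withDensity_iff (measurable_gaussianPDF 0 1)
      (ae_of_all _ fun x => ENNReal.ofReal_lt_top)]
  have hpdf : ∀ x : ℝ, (gaussianPDF 0 1 x).toReal ≤ Real.exp (-(1/2) * x ^ 2) := by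
    intro x
    rw [gaussianPDF, ENNReal.toReal_ofReal (gaussianPDFReal_nonneg 0 1 x)]
    rw [gaussianPDFReal]
    simp only [NNReal.coe_one, mul_one, sub_zero]
    have h1 : (Real.sqrt (2 * Real.pi))⁻¹ ≤ 1 :=
      inv_le_one_of_one_le₀ (Real.one_le_sqrt.2 (by nlinarith [Real.pi_gt_three]))
    have h2 : -x ^ 2 / 2 = -(1/2) * x ^ 2 := by ring
    rw [h2]
    calc (Real.sqrt (2 * Real.pi))⁻¹ * Real.exp (-(1/2) * x ^ 2)
        ≤ 1 * Real.exp (-(1/2) * x ^ 2) :=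
          mul_le_mul_of_nonneg_right h1 (Real.exp_pos _).le
      _ = _ := one_mul _
  apply Integrable.mono'
    (g := fun x : ℝ => (n.factorial : ℝ) * Real.exp 1 * Real.exp (-(1/4) * x ^ 2))
  · exact (integrable_exp_neg_mul_sq (by norm_num : (0:ℝ) < 1/4)).const_mul _
  · exact ((measurable_id.pow_const n).mul
      (measurable_gaussianPDF 0 1).ennreal_toReal).aestronglyMeasurable
  · refine ae_of_all _ fun x => ?_
    rw [Real.norm_eq_abs, abs_mul]
    calc |x ^ n| * |(gaussianPDF 0 1 x).toReal|
        ≤ |x| ^ n * Real.exp (-(1/2) * x ^ 2) := by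
          rw [abs_pow, abs_of_nonneg ENNReal.toReal_nonneg]
          exact mul_le_mul_of_nonneg_left (hpdf x) (by positivity)
      _ ≤ _ := pow_mul_exp_bound n x

lemma abs_integral_le_moment (n : ℕ) (g : ℝ → ℝ) (K : ℝ)
    (hb : ∀ y : ℝ, |g y| ≤ y ^ n * K) :
    |∫ y, g y ∂(gaussianReal 0 1)| ≤ (∫ y, y ^ n ∂(gaussianReal 0 1)) * K := by
  calc |∫ y, g y ∂(gaussianReal 0 1)| ≤ ∫ y, |g y| ∂(gaussianReal 0 1) := by
        simpa [Real.norm_eq_abs] using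
          norm_integral_le_integral_norm (μ := gaussianReal 0 1) g
    _ ≤ ∫ y, y ^ n * K ∂(gaussianReal 0 1) :=
        integral_mono_of_nonneg (ae_of_all _ fun y => abs_nonneg _)
          ((myGaussInt n).mul_const K) (ae_of_all _ hb)
    _ = _ := integral_mul_const _ _

lemma inner_bound (f : ℝ → ℝ) (a : ℝ → ℝ) (w : ℝ → ℝ) (M : ℝ)
    (hf : ∀ x, |f x| ≤ M) (hw : ∀ u ∈ Set.uIoc (0:ℝ) 1, |w u| ≤ 1) :
    |∫ u in (0:ℝ)..1, f (a u) * w u| ≤ M := by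
  have hM : 0 ≤ M := le_trans (abs_nonneg _) (hf 0)
  have hb : ∀ u ∈ Set.uIoc (0:ℝ) 1, ‖f (a u) * w u‖ ≤ M := by
    intro u hu
    rw [Real.norm_eq_abs, abs_mul]
    calc |f (a u)| * |w u| ≤ M * 1 := mul_le_mul (hf _) (hw u hu) (abs_nonneg _) hM
      _ = M := mul_one M
  have := intervalIntegral.norm_integral_le_of_norm_le_const hb
  simpa [Real.norm_eq_abs] using this

lemma mul_deriv2_bound (h φ : ℝ → ℝ) (hh : ContDiff ℝ 2 h) (hφ : ContDiff ℝ 2 φ)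
    (Ch Nφ : ℝ) (hCh : ∀ k ≤ 2, ∀ x, |iteratedDeriv k h x| ≤ Ch)
    (hNφ : ∀ k ≤ 2, ∀ x, |iteratedDeriv k φ x| ≤ Nφ)
    (hCh0 : 0 ≤ Ch) (hN0 : 0 ≤ Nφ) (x : ℝ) :
    |iteratedDeriv 2 (fun y => h y * φ y) x| ≤ 4 * Ch * Nφ := by
  have key := norm_iteratedFDeriv_mul_le (𝕜 := ℝ) hh hφ x (le_refl _)
  simp only [norm_iteratedFDeriv_eq_norm_iteratedDeriv, Real.norm_eq_abs] at key
  refine key.trans ?_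
  have m : ∀ i, i ≤ 2 → |iteratedDeriv i h x| * |iteratedDeriv (2 - i) φ x| ≤ Ch * Nφ :=
    fun i hi => mul_le_mul (hCh i hi x) (hNφ (2 - i) (by omega) x) (abs_nonneg _) hCh0
  have m0 := m 0 (by norm_num)
  have m1 := m 1 (by norm_num)
  have m2 := m 2 (by norm_num)
  norm_num [Finset.sum_range_succ]
  norm_num at m0 m1 m2
  nlinarith [m0, m1, m2]


/-- Bound on the observation-direction remainder term `R²` of the Gaussian mixture
approximation: `|R²(φ; v, ω)| ≤ C₂ ω ‖φ‖_{4,∞}` with `C₂` depending only on `h`. -/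
theorem R2_bound (h : ℝ → ℝ) (hh : ContDiff ℝ 2 h)
    (hhb : ∀ k : ℕ, k ≤ 2 → ∃ C : ℝ, ∀ x : ℝ, |iteratedDeriv k h x| ≤ C) :
    ∃ C₂ : ℝ, ∀ (v ω : ℝ), ω ∈ Set.Ioc (0:ℝ) 1 →
      ∀ φ : ℝ → ℝ, ContDiff ℝ 4 φ →
        (∀ k : ℕ, k ≤ 4 → ∃ C : ℝ, ∀ x : ℝ, |iteratedDeriv k φ x| ≤ C) →
        |ω * ((1 / 2) * h v * iteratedDeriv 2 φ v - Iv v ω (fun x => h x * φ x))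
            + ω ^ 2 * h v * I4 4 v ω φ|
          ≤ C₂ * ω * normM 4 φ := by
  obtain ⟨C0, hC0⟩ := hhb 0 (by norm_num)
  obtain ⟨C1, hC1⟩ := hhb 1 (by norm_num)
  obtain ⟨Cc, hCc⟩ := hhb 2 (by norm_num)
  set Ch := max (max C0 C1) (max Cc 0) with hChdef
  have hCh0 : 0 ≤ Ch := le_max_of_le_right (le_max_right _ _)
  have hChb : ∀ k, k ≤ 2 → ∀ x, |iteratedDeriv k h x| ≤ Ch := by
    intro k hk x
    interval_cases k
    · exact (hC0 x).trans (le_max_of_le_left (le_max_left _ _))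
    · exact (hC1 x).trans (le_max_of_le_left (le_max_right _ _))
    · exact (hCc x).trans (le_max_of_le_right (le_max_left _ _))
  set A := ∫ y, y ^ 2 ∂(gaussianReal 0 1) with hAdef
  set B := ∫ y, y ^ 4 ∂(gaussianReal 0 1) with hBdef
  have hA0 : 0 ≤ A := integral_nonneg fun y => by positivity
  have hB0 : 0 ≤ B := integral_nonneg fun y => by positivity
  refine ⟨Ch * (1 + 4 * A + B), ?_⟩
  intro v ω hω φ hφ hφb
  obtain ⟨hω0, hω1⟩ := hω
  set N := normM 4 φ with hNdef
  have hNb : ∀ k, k ≤ 4 → ∀ x, |iteratedDeriv k φ x| ≤ N := by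
    intro k hk x
    obtain ⟨C, hC⟩ := hφb k hk
    have hbdd : BddAbove (Set.range fun x => |iteratedDeriv k φ x|) := by
      refine ⟨C, ?_⟩
      rintro r ⟨x, rfl⟩
      exact hC x
    have h1 : |iteratedDeriv k φ x| ≤ ⨆ x, |iteratedDeriv k φ x| := le_ciSup hbdd x
    refine h1.trans ?_
    exact Finset.single_le_sum (f := fun k => ⨆ x, |iteratedDeriv k φ x|)
      (fun i _ => Real.iSup_nonneg fun x => abs_nonneg _) (Finset.mem_range.2 (by omega))
  have hN0 : 0 ≤ N := le_trans (abs_nonneg _) (hNb 0 (by norm_num) 0)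
  have hprod : ∀ x, |iteratedDeriv 2 (fun y => h y * φ y) x| ≤ 4 * Ch * N :=
    mul_deriv2_bound h φ hh (hφ.of_le (by norm_num)) Ch N hChb
      (fun k hk => hNb k (by omega)) hCh0 hN0
  have hIv : |Iv v ω (fun x => h x * φ x)| ≤ A * (4 * Ch * N) := by
    rw [Iv]
    apply abs_integral_le_moment 2
    intro y
    rw [abs_mul, abs_of_nonneg (sq_nonneg y)]
    refine mul_le_mul_of_nonneg_left ?_ (sq_nonneg y)
    refine inner_bound _ (fun u => v + u * y * Real.sqrt ω) (fun u => 1 - u) _ hprod ?_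
    intro u hu
    rw [Set.uIoc_of_le (by norm_num : (0:ℝ) ≤ 1)] at hu
    rw [abs_le]
    beta_reduce
    constructor <;> [linarith [hu.2]; linarith [hu.1]]
  have hI4 : |I4 4 v ω φ| ≤ B * N := by
    rw [I4]
    apply abs_integral_le_moment 4
    intro y
    rw [abs_mul, abs_of_nonneg (by positivity : (0:ℝ) ≤ y ^ 4)]
    refine mul_le_mul_of_nonneg_left ?_ (by positivity)
    refine inner_bound _ (fun u => v + u * y * Real.sqrt ω) (fun u => (1 - u) ^ 3 / 6) _
      (hNb 4 le_rfl) ?_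
    intro u hu
    rw [Set.uIoc_of_le (by norm_num : (0:ℝ) ≤ 1)] at hu
    have h01 : 0 ≤ 1 - u := by linarith [hu.2]
    have hle : (1 - u) ^ 3 ≤ 1 := pow_le_one₀ h01 (by linarith [hu.1])
    have hge : 0 ≤ (1 - u) ^ 3 := by positivity
    rw [abs_le]
    beta_reduce
    constructor <;> linarith
  have hhv : |h v| ≤ Ch := by
    have := hChb 0 (by norm_num) v
    simpa [iteratedDeriv_zero] using this
  have hφ2 : |iteratedDeriv 2 φ v| ≤ N := hNb 2 (by norm_num) v
  have b1 : |ω * ((1 / 2) * h v * iteratedDeriv 2 φ v - Iv v ω (fun x => h x * φ x))|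
      ≤ ω * (Ch * N + A * (4 * Ch * N)) := by
    rw [abs_mul, abs_of_pos hω0]
    refine mul_le_mul_of_nonneg_left ?_ hω0.le
    refine (abs_sub _ _).trans (add_le_add ?_ hIv)
    rw [abs_mul, abs_mul]
    have e : |(1:ℝ) / 2| = 1 / 2 := by norm_num
    rw [e]
    nlinarith [mul_le_mul hhv hφ2 (abs_nonneg _) hCh0,
      abs_nonneg (h v), abs_nonneg (iteratedDeriv 2 φ v)]
  have b2 : |ω ^ 2 * h v * I4 4 v ω φ| ≤ ω ^ 2 * (Ch * (B * N)) := by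
    rw [abs_mul, abs_mul, abs_of_nonneg (sq_nonneg ω)]
    rw [mul_assoc]
    refine mul_le_mul_of_nonneg_left ?_ (sq_nonneg ω)
    exact mul_le_mul hhv hI4 (abs_nonneg _) hCh0
  have key := (abs_add_le _ _).trans (add_le_add b1 b2)
  refine key.trans ?_
  have hω2 : ω ^ 2 ≤ ω := by nlinarith
  have hnn : 0 ≤ Ch * (B * N) := by positivity
  calc ω * (Ch * N + A * (4 * Ch * N)) + ω ^ 2 * (Ch * (B * N))
      ≤ ω * (Ch * N + A * (4 * Ch * N)) + ω * (Ch * (B * N)) := by nlinarith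
    _ = Ch * (1 + 4 * A + B) * ω * N := by ring
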